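/- arXiv:1703.01777 — 5 statements merged into one kernel-verified Lean document; each statement's English description precedes it below -/
import Mathlib

section
/- Let y = (y_α)_{|α| ≤ 2d} be a truncated moment sequence with y_0 = 1 and suppose the one-dimensional marginal moments satisfy L_y(x_i^{2d}) ≤ M for all i = 1,…,n, for some M ≥ 1, and that M_d(y) is positive semidefinite. Then |y_α| ≤ M for all |α| ≤ 2d. -/
/-!
The `2 × 2` principal minors of `M_d(y) ⪰ 0` give `y_{β+γ}² ≤ y_{2β} y_{2γ}` for `|β|, |γ| ≤ d`.
Hence `β ↦ y_{2β}` is nonnegative and midpoint log-convex on the lattice simplex `|β| ≤ d`, so a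
maximizer of it that also maximizes the strictly convex `∑ βᵢ²` among all its maximizers is not
the midpoint of two other lattice points of the simplex. Such a point is a vertex `0` or `d eᵢ`,
where `y_{2β}` is `1` or `L_y(xᵢ^{2d})`, both at most `M`. Finally every `α` with `|α| ≤ 2d` is
`β + γ` with `|β|, |γ| ≤ d`, and `y_α² ≤ y_{2β} y_{2γ} ≤ M²`.
-/

open MeasureTheory Real Matrix
open scoped BigOperators ENNReal

/-- Multi-indices in `n` variables of total degree at most `d`. -/
def Idx (n d : ℕ) : Type := {α : Fin n → Fin (d+1) // ∑ i, (α i : ℕ) ≤ d}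

instance (n d : ℕ) : Fintype (Idx n d) := by unfold Idx; infer_instance
instance (n d : ℕ) : DecidableEq (Idx n d) := by unfold Idx; infer_instance

/-- The multi-index (exponent vector) associated with an element of `Idx n d`. -/
def toMI {n d : ℕ} (A : Idx n d) : Fin n → ℕ := fun i => (A.1 i : ℕ)

/-- The monomial `x^α`. -/
noncomputable def mono {n : ℕ} (x : Fin n → ℝ) (α : Fin n → ℕ) : ℝ := ∏ i, x i ^ α i

/-- The moment matrix of order `d` of a (pseudo-)moment sequence `y`. -/
noncomputable def momMat (n d : ℕ) (y : (Fin n → ℕ) → ℝ) : Matrix (Idx n d) (Idx n d) ℝ :=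
  Matrix.of fun α β => y (toMI α + toMI β)

/-- The vector of monomials of degree at most `d`. -/
noncomputable def vd (n d : ℕ) (x : Fin n → ℝ) : Idx n d → ℝ := fun α => mono x (toMI α)

theorem Matrix.PosSemidef.apply_sq_le {I : Type*} [Fintype I] [DecidableEq I] {A : Matrix I I ℝ}
    (hA : A.PosSemidef) (a b : I) : A a b ^ 2 ≤ A a a * A b b := by
  have hdet := (hA.submatrix ![a, b]).det_nonneg
  have hsymm : A b a = A a b := hA.isHermitian.apply a b
  simp only [Matrix.det_fin_two, submatrix_apply, Matrix.cons_val_zero, Matrix.cons_val_one,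
    hsymm] at hdet
  nlinarith

section Multiindex

variable {ι : Type*} [DecidableEq ι]

lemma sum_add_single_one [Fintype ι] (β : ι → ℕ) (k : ι) :
    ∑ i, (β + Pi.single k 1 : ι → ℕ) i = ∑ i, β i + 1 := by
  simp [Finset.sum_add_distrib]

lemma tsub_single_one_add_single_one {β : ι → ℕ} {k : ι} (hk : β k ≠ 0) :
    β - Pi.single k 1 + Pi.single k 1 = β := by
  funext j
  by_cases hj : j = k
  · subst hj; simp; omega
  · simp [hj]

lemma sum_tsub_single_one_add_one [Fintype ι] {β : ι → ℕ} {k : ι} (hk : β k ≠ 0) :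
    ∑ i, (β - Pi.single k 1 : ι → ℕ) i + 1 = ∑ i, β i := by
  rw [← sum_add_single_one, tsub_single_one_add_single_one hk]

lemma exists_add_eq_of_sum_le_add [Fintype ι] {a b : ℕ} (α : ι → ℕ) (h : ∑ i, α i ≤ a + b) :
    ∃ β γ : ι → ℕ, β + γ = α ∧ ∑ i, β i ≤ a ∧ ∑ i, γ i ≤ b := by
  induction a generalizing α with
  | zero => exact ⟨0, α, zero_add α, by simp, by simpa using h⟩
  | succ a ih =>
    by_cases hb : ∑ i, α i ≤ b
    · exact ⟨0, α, zero_add α, by simp, hb⟩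
    obtain ⟨k, hk⟩ : ∃ k, α k ≠ 0 := by
      by_contra! h0
      simp [h0] at hb
    have hα := tsub_single_one_add_single_one hk
    have hsum := sum_tsub_single_one_add_one hk
    obtain ⟨β, γ, hβγ, hβ, hγ⟩ := ih (α - Pi.single k 1) (by omega)
    refine ⟨β + Pi.single k 1, γ, ?_, by rw [sum_add_single_one]; omega, hγ⟩
    rw [add_right_comm, hβγ, hα]

end Multiindex

lemma two_mul_sq_le_sq_add_sq {a b c : ℕ} (h : a + b = c + c) : 2 * c ^ 2 ≤ a ^ 2 + b ^ 2 := by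
  zify at *
  nlinarith [sq_nonneg ((a : ℤ) - c)]

lemma two_mul_sq_lt_sq_add_sq {a b c : ℕ} (h : a + b = c + c) (hne : a ≠ c) :
    2 * c ^ 2 < a ^ 2 + b ^ 2 := by
  have hpos : 0 < ((a : ℤ) - c) * ((a : ℤ) - c) :=
    mul_self_pos.mpr (sub_ne_zero.mpr (by exact_mod_cast hne))
  zify at *
  nlinarith

lemma two_mul_sum_sq_lt_of_add_eq_add {ι : Type*} [Fintype ι] {β β' β'' : ι → ℕ}
    (h : β' + β'' = β + β) (hne : β' ≠ β) : 2 * ∑ i, β i ^ 2 < ∑ i, β' i ^ 2 + ∑ i, β'' i ^ 2 := by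
  obtain ⟨k, hk⟩ := Function.ne_iff.mp hne
  rw [Finset.mul_sum, ← Finset.sum_add_distrib]
  exact Finset.sum_lt_sum (fun i _ => two_mul_sq_le_sq_add_sq (congrFun h i))
    ⟨k, Finset.mem_univ k, two_mul_sq_lt_sq_add_sq (congrFun h k) hk⟩

lemma le_of_sq_le_mul {a b c : ℝ} (h : a ^ 2 ≤ b * c) (hb : 0 ≤ b) (hca : c ≤ a) :
    a ≤ b := by
  nlinarith

def midpointExtremePoints {ι : Type*} (S : Set (ι → ℕ)) : Set (ι → ℕ) :=
  {β ∈ S | ∀ β' ∈ S, ∀ β'' ∈ S, β' + β'' = β + β → β' = β}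

theorem exists_mem_midpointExtremePoints_forall_le {ι : Type*} [Fintype ι] {S : Set (ι → ℕ)}
    (hS : S.Finite) (hSne : S.Nonempty) {f : (ι → ℕ) → ℝ} (hf₀ : ∀ β ∈ S, 0 ≤ f β)
    (hf : ∀ β ∈ S, ∀ β' ∈ S, ∀ β'' ∈ S, β' + β'' = β + β → f β ^ 2 ≤ f β' * f β'') :
    ∃ β ∈ midpointExtremePoints S, ∀ γ ∈ S, f γ ≤ f β := by
  set T := {β ∈ S | ∀ γ ∈ S, f γ ≤ f β}
  have hTne : T.Nonempty := S.exists_max_image f hS hSne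
  obtain ⟨β, ⟨hβ, hβmax⟩, hβT⟩ :=
    T.exists_max_image (fun β => ∑ i, β i ^ 2) (hS.subset (Set.sep_subset _ _)) hTne
  refine ⟨β, ⟨hβ, fun β' hβ' β'' hβ'' hsum => ?_⟩, hβmax⟩
  by_contra hne
  have hmem : ∀ β' ∈ S, ∀ β'' ∈ S, β' + β'' = β + β → β' ∈ T := fun β' hβ' β'' hβ'' hsum =>
    ⟨hβ', fun γ hγ => (hβmax γ hγ).trans
      (le_of_sq_le_mul (hf β hβ β' hβ' β'' hβ'' hsum) (hf₀ β' hβ')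
        (hβmax β'' hβ''))⟩
  have h' := hβT β' (hmem β' hβ' β'' hβ'' hsum)
  have h'' := hβT β'' (hmem β'' hβ'' β' hβ' ((add_comm _ _).trans hsum))
  have := two_mul_sum_sq_lt_of_add_eq_add hsum hne
  omega

lemma eq_zero_or_eq_single_of_mem_midpointExtremePoints {ι : Type*} [Fintype ι] [DecidableEq ι]
    {d : ℕ} {β : ι → ℕ} (hβ : β ∈ midpointExtremePoints {β | ∑ i, β i ≤ d}) :
    β = 0 ∨ ∃ i, β = Pi.single i d := by
  obtain ⟨hβd, hext⟩ := hβ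
  simp only [Set.mem_ofPred_eq] at hβd hext
  by_cases h0 : β = 0
  · exact Or.inl h0
  obtain ⟨i, hi⟩ := Function.ne_iff.mp h0
  have hβi := tsub_single_one_add_single_one hi
  have hsum_i := sum_tsub_single_one_add_one hi
  by_cases hlt : ∑ k, β k < d
  · have hsum : β + Pi.single i 1 + (β - Pi.single i 1) = β + β := by
      rw [add_assoc, add_comm (Pi.single i 1), hβi]
    have := congrFun (hext _ (by rw [sum_add_single_one]; omega) _ (by omega) hsum) i
    simp at this
  by_cases hj : ∃ j ≠ i, β j ≠ 0
  · obtain ⟨j, hji, hj⟩ := hj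
    have hβj := tsub_single_one_add_single_one hj
    have hsum_j := sum_tsub_single_one_add_one hj
    have hsum : β - Pi.single j 1 + Pi.single i 1 + (β - Pi.single i 1 + Pi.single j 1) = β + β :=
      calc _ = β - Pi.single j 1 + Pi.single j 1 + (β - Pi.single i 1 + Pi.single i 1) := by
            ac_rfl
        _ = β + β := by rw [hβi, hβj]
    have := congrFun (hext _ (by rw [sum_add_single_one]; omega) _
      (by rw [sum_add_single_one]; omega) hsum) i
    simp [hji.symm] at this
  push Not at hj
  have hsum : ∑ k, β k = β i := Finset.sum_eq_single i (fun j _ => hj j) (by simp)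
  refine Or.inr ⟨i, funext fun j => ?_⟩
  by_cases hji : j = i
  · subst hji; simp; omega
  · simp [hji, hj j hji]

section MomentMatrix

variable {n d : ℕ} {y : (Fin n → ℕ) → ℝ}

lemma mem_range_toMI {β : Fin n → ℕ} :
    β ∈ Set.range (toMI : Idx n d → Fin n → ℕ) ↔ ∑ i, β i ≤ d := by
  constructor
  · rintro ⟨A, rfl⟩
    exact A.2
  · intro hβ
    refine ⟨⟨fun i => ⟨β i, Nat.lt_succ_of_le ?_⟩, by simpa using hβ⟩, rfl⟩
    exact (Finset.single_le_sum (fun j _ => Nat.zero_le (β j)) (Finset.mem_univ i)).trans hβ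

lemma sq_le_of_posSemidef_momMat (hpsd : (momMat n d y).PosSemidef) {β γ : Fin n → ℕ}
    (hβ : ∑ i, β i ≤ d) (hγ : ∑ i, γ i ≤ d) : y (β + γ) ^ 2 ≤ y (β + β) * y (γ + γ) := by
  obtain ⟨A, rfl⟩ : β ∈ Set.range toMI := mem_range_toMI.mpr hβ
  obtain ⟨B, rfl⟩ : γ ∈ Set.range toMI := mem_range_toMI.mpr hγ
  exact hpsd.apply_sq_le A B

lemma nonneg_of_posSemidef_momMat (hpsd : (momMat n d y).PosSemidef) {β : Fin n → ℕ}
    (hβ : ∑ i, β i ≤ d) : 0 ≤ y (β + β) := by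
  obtain ⟨A, rfl⟩ : β ∈ Set.range toMI := mem_range_toMI.mpr hβ
  exact hpsd.diag_nonneg (i := A)

theorem diag_le_of_posSemidef_momMat {M : ℝ} (hM : 1 ≤ M) (hy0 : y 0 = 1)
    (hdiag : ∀ i : Fin n, y (fun j => if j = i then 2 * d else 0) ≤ M)
    (hpsd : (momMat n d y).PosSemidef) {β : Fin n → ℕ} (hβ : ∑ i, β i ≤ d) :
    y (β + β) ≤ M := by
  obtain ⟨β₀, hext, hmax⟩ := exists_mem_midpointExtremePoints_forall_le
    (S := {β | ∑ i, β i ≤ d}) (f := fun β => y (β + β))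
    ((Set.finite_range (toMI : Idx n d → _)).subset fun _ => mem_range_toMI.mpr) ⟨0, by simp⟩
    (fun β hβ => nonneg_of_posSemidef_momMat hpsd hβ)
    (fun β _ β' hβ' β'' hβ'' hsum => hsum ▸ sq_le_of_posSemidef_momMat hpsd hβ' hβ'')
  refine (hmax β hβ).trans ?_
  rcases eq_zero_or_eq_single_of_mem_midpointExtremePoints hext with rfl | ⟨i, rfl⟩
  · simpa [hy0] using hM
  · have hdouble : Pi.single i d + Pi.single i d = fun j => if j = i then 2 * d else 0 := by
      funext j
      by_cases hj : j = i <;> simp [hj, two_mul]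
    exact hdouble ▸ hdiag i

theorem abs_le_of_posSemidef_momMat {M : ℝ} (hpsd : (momMat n d y).PosSemidef)
    (hdiag : ∀ β : Fin n → ℕ, ∑ i, β i ≤ d → y (β + β) ≤ M) {α : Fin n → ℕ}
    (hα : ∑ i, α i ≤ 2 * d) : |y α| ≤ M := by
  obtain ⟨β, γ, rfl, hβ, hγ⟩ := exists_add_eq_of_sum_le_add α (a := d) (b := d) (by omega)
  have hM : 0 ≤ M := (nonneg_of_posSemidef_momMat hpsd hβ).trans (hdiag β hβ)
  refine abs_le_of_sq_le_sq ?_ hM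
  calc y (β + γ) ^ 2 ≤ y (β + β) * y (γ + γ) := sq_le_of_posSemidef_momMat hpsd hβ hγ
    _ ≤ M * M := mul_le_mul (hdiag β hβ) (hdiag γ hγ) (nonneg_of_posSemidef_momMat hpsd hγ) hM
    _ = M ^ 2 := (sq M).symm

end MomentMatrix

/-- Lasserre–Netzer bound: if `y` is a truncated sequence of order `2d` with `y₀ = 1`,
`L_y(xᵢ^{2d}) ≤ M` for all `i` and some `M ≥ 1`, and `M_d(y) ⪰ 0`, then `|y_α| ≤ M` for
all `|α| ≤ 2d`. -/
theorem lasserre_netzer_bound (n d : ℕ) (M : ℝ) (hM : 1 ≤ M)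
    (y : (Fin n → ℕ) → ℝ) (hy0 : y 0 = 1)
    (hdiag : ∀ i : Fin n, y (fun j => if j = i then 2 * d else 0) ≤ M)
    (hpsd : (momMat n d y).PosSemidef) :
    ∀ α : Fin n → ℕ, (∑ i, α i) ≤ 2 * d → |y α| ≤ M :=
  fun _ hα => abs_le_of_posSemidef_momMat hpsd
    (fun _ hβ => diag_le_of_posSemidef_momMat hM hy0 hdiag hpsd hβ) hα
end

section
/- Let y be a truncated moment sequence of order 2(d+δ) with y_0 = 1, and suppose the localizing matrix M_{d+δ−1}((1−‖x‖²) y) is positive semidefinite and M_{d+δ}(y) is positive semidefinite. Then L_y(x_i^{2(d+δ)}) ≤ 1 for every i = 1,…,n. -/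
open MeasureTheory Real Matrix
open scoped BigOperators ENNReal

/-- The localizing matrix `M_k(g y)` of a polynomial `g` and a sequence `y`, with entries
`L_y(g · x^α x^β)` for `|α|, |β| ≤ k`. -/
noncomputable def locMat (n k : ℕ) (g : MvPolynomial (Fin n) ℝ) (y : (Fin n → ℕ) → ℝ) :
    Matrix (Idx n k) (Idx n k) ℝ :=
  Matrix.of fun α β => ∑ γ ∈ g.support, g.coeff γ * y (⇑γ + toMI α + toMI β)

/-! The diagonal entry of `M_k((1 - ‖x‖²) y)` at `x^f` gives
`L_y(x^{2f}) ≥ ∑ⱼ L_y(xⱼ² x^{2f}) ≥ L_y(xᵢ² x^{2f})`, the dropped terms being diagonal entries of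
`M(y)`. With `f = k eᵢ` this makes `k ↦ L_y(xᵢ^{2k})` nonincreasing, starting from `y₀ = 1`. -/

open MvPolynomial

lemma MvPolynomial.sum_support_coeff_mul_eq_constr {R σ : Type*} [CommSemiring R]
    (g : MvPolynomial σ R) (F : (σ →₀ ℕ) → R) :
    ∑ γ ∈ g.support, g.coeff γ * F γ = (basisMonomials σ R).constr R F g := by
  rw [Module.Basis.constr_apply, Finsupp.sum]
  rfl

lemma sum_support_one_sub_sum_X_sq {R σ : Type*} [CommRing R] [Fintype σ]
    (F : (σ →₀ ℕ) → R) :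
    ∑ γ ∈ (1 - ∑ i, X i ^ 2 : MvPolynomial σ R).support,
        (1 - ∑ i, X i ^ 2 : MvPolynomial σ R).coeff γ * F γ
      = F 0 - ∑ j, F (Finsupp.single j 2) := by
  have h1 : (1 : MvPolynomial σ R) = basisMonomials σ R 0 := rfl
  have hX (j : σ) : (X j ^ 2 : MvPolynomial σ R) = basisMonomials σ R (Finsupp.single j 2) :=
    X_pow_eq_monomial
  simp only [sum_support_coeff_mul_eq_constr, map_sub, map_sum, h1, hX,
    Module.Basis.constr_basis]

lemma locMat_one_sub_sum_X_sq_apply (n k : ℕ) (y : (Fin n → ℕ) → ℝ) (α β : Idx n k) :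
    locMat n k (1 - ∑ i, X i ^ 2) y α β
      = y (toMI α + toMI β) - ∑ j, y (Pi.single j 2 + toMI α + toMI β) := by
  simp only [locMat, of_apply, sum_support_one_sub_sum_X_sq, Finsupp.coe_zero, zero_add,
    Finsupp.single_eq_pi_single]

def Idx.ofExponent {n d : ℕ} (f : Fin n → ℕ) (h : ∑ j, f j ≤ d) : Idx n d :=
  ⟨fun j => ⟨f j, Nat.lt_succ_of_le ((Finset.single_le_sum (fun k _ => Nat.zero_le (f k))
      (Finset.mem_univ j)).trans h)⟩, h⟩

@[simp]
lemma toMI_ofExponent {n d : ℕ} (f : Fin n → ℕ) (h : ∑ j, f j ≤ d) :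
    toMI (Idx.ofExponent f h) = f := rfl

lemma momMat_diag_nonneg {n d : ℕ} {y : (Fin n → ℕ) → ℝ} (hmom : (momMat n d y).PosSemidef)
    {f : Fin n → ℕ} (hf : ∑ j, f j ≤ d) : 0 ≤ y (f + f) :=
  hmom.diag_nonneg (i := Idx.ofExponent f hf)

lemma sum_moment_single_two_add_le {n k : ℕ} {y : (Fin n → ℕ) → ℝ}
    (hloc : (locMat n k (1 - ∑ i, X i ^ 2) y).PosSemidef)
    {f : Fin n → ℕ} (hf : ∑ j, f j ≤ k) : ∑ j, y (Pi.single j 2 + f + f) ≤ y (f + f) := by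
  have := hloc.diag_nonneg (i := Idx.ofExponent f hf)
  rw [locMat_one_sub_sum_X_sq_apply, toMI_ofExponent] at this
  linarith

lemma moment_single_two_add_le {n k m : ℕ} {y : (Fin n → ℕ) → ℝ}
    (hloc : (locMat n k (1 - ∑ i, X i ^ 2) y).PosSemidef) (hmom : (momMat n m y).PosSemidef)
    {f : Fin n → ℕ} (hfk : ∑ j, f j ≤ k) (hfm : ∑ j, f j < m) (i : Fin n) :
    y (Pi.single i 2 + f + f) ≤ y (f + f) := by
  have hterm (j : Fin n) : 0 ≤ y (Pi.single j 2 + f + f) := by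
    have hdeg : ∑ l, ((Pi.single j 1 : Fin n → ℕ) + f) l ≤ m := by
      simp only [Pi.add_apply, Finset.sum_add_distrib, Finset.sum_pi_single', Finset.mem_univ,
        if_true]
      omega
    convert momMat_diag_nonneg hmom hdeg using 2
    rw [show (2 : ℕ) = 1 + 1 from rfl, Pi.single_add]
    abel
  calc y (Pi.single i 2 + f + f)
      ≤ ∑ j, y (Pi.single j 2 + f + f) :=
        Finset.single_le_sum (fun j _ => hterm j) (Finset.mem_univ i)
    _ ≤ y (f + f) := sum_moment_single_two_add_le hloc hfk

lemma moment_pi_single_succ_le {n k m : ℕ} {y : (Fin n → ℕ) → ℝ}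
    (hloc : (locMat n k (1 - ∑ i, X i ^ 2) y).PosSemidef) (hmom : (momMat n m y).PosSemidef)
    (i : Fin n) {l : ℕ} (hlk : l ≤ k) (hlm : l < m) :
    y (Pi.single i (2 * (l + 1))) ≤ y (Pi.single i (2 * l)) := by
  have hdouble (a : ℕ) : Pi.single i a + Pi.single i a = (Pi.single i (2 * a) : Fin n → ℕ) := by
    rw [← Pi.single_add, two_mul]
  have hdeg : ∑ j, (Pi.single i l : Fin n → ℕ) j = l := by simp
  have := moment_single_two_add_le hloc hmom (f := Pi.single i l) (by omega) (by omega) i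
  rwa [add_assoc, hdouble, ← Pi.single_add, show 2 + 2 * l = 2 * (l + 1) by ring] at this

/-- If `y` is a truncated sequence of order `2(d+δ)` with `y₀ = 1`, PSD localizing matrix
`M_{d+δ-1}((1-‖x‖²) y)` and PSD moment matrix `M_{d+δ}(y)`, then
`L_y(xᵢ^{2(d+δ)}) ≤ 1` for every `i`. -/
theorem ball_moment_bound (n d δ : ℕ) (y : (Fin n → ℕ) → ℝ) (hy0 : y 0 = 1)
    (hloc : (locMat n (d + δ - 1) (1 - ∑ i : Fin n, MvPolynomial.X i ^ 2) y).PosSemidef)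
    (hmom : (momMat n (d + δ) y).PosSemidef) :
    ∀ i : Fin n, y (fun j => if j = i then 2 * (d + δ) else 0) ≤ 1 := by
  intro i
  have hle (k : ℕ) (hk : k ≤ d + δ) : y (Pi.single i (2 * k)) ≤ 1 := by
    induction k with
    | zero => simp [hy0]
    | succ k ih =>
      exact (moment_pi_single_succ_le hloc hmom i (by omega) hk).trans (ih (by omega))
  convert hle (d + δ) le_rfl using 2
  ext j
  exact (Pi.single_apply i _ j).symm
end

section
/- Let X ⊆ R^n be compact with nonempty interior and let y* be the unique optimizer of max { log det M_d(y) : y ∈ M_{2d}(X), y_0 = 1 } with Christoffel polynomial p*_d(x) = v_d(x)^T M_d(y*)^{-1} v_d(x). Then p*_d(x) ≤ binom(n+d,n) for all x ∈ X, and any representing measure μ* of y* on X is supported on the set {x ∈ X : p*_d(x) = binom(n+d,n)}. -/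
open MeasureTheory Real Matrix
open scoped BigOperators ENNReal

/-- The truncated moment cone: sequences that agree, up to degree `k`, with the moments
of some finite nonnegative Borel measure supported on `X`. -/
def momCone (n k : ℕ) (X : Set (Fin n → ℝ)) : Set ((Fin n → ℕ) → ℝ) :=
  {y | ∃ μ : Measure (Fin n → ℝ), IsFiniteMeasure μ ∧ μ Xᶜ = 0 ∧
        ∀ α : Fin n → ℕ, (∑ i, α i) ≤ k → y α = ∫ x, mono x α ∂μ}

/-- The support of a measure: the set of points all of whose neighborhoods have
nonzero measure. -/
def msupport {X : Type*} [TopologicalSpace X] [MeasurableSpace X] (μ : Measure X) :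
    Set X :=
  {x | ∀ U ∈ nhds x, μ U ≠ 0}

/-!
For `x ∈ X` and `t ∈ (0, 1]` the moments of `(1 - t) μ* + t δₓ` are again feasible, and with
`M = M_d(y*)`, `v = v_d(x)`, `N = binom(n+d, n) = #Idx n d` one has
`det ((1 - t) M + t v vᵀ) = det M · det (1 + t (M⁻¹ v vᵀ - 1))`
`                         = det M · (1 + t (p*_d(x) - N) + O(t²))`.
Optimality of `y*` forces the first-order coefficient `p*_d(x) - N` to be nonpositive.
Conversely `∫ p*_d dμ* = trace (M⁻¹ M) = N = ∫ N dμ*`, so the nonnegative continuous function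
`N - p*_d` vanishes `μ*`-almost everywhere, hence on the closed set carrying `μ*`.
-/

def Idx.equivSumEq (n d : ℕ) : Idx n d ≃ {f : Fin (n + 1) → ℕ // ∑ i, f i = d} where
  toFun A := ⟨Fin.cons (d - ∑ i, (A.1 i : ℕ)) (fun i => A.1 i), by
    rw [Fin.sum_cons]; exact Nat.sub_add_cancel A.2⟩
  invFun f := ⟨fun i => ⟨f.1 i.succ, by
      have hf := f.2
      rw [Fin.sum_univ_succ] at hf
      have := Finset.single_le_sum (fun j _ => Nat.zero_le (f.1 (Fin.succ j))) (Finset.mem_univ i)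
      omega⟩, by
    have hf := f.2
    rw [Fin.sum_univ_succ] at hf
    simp only
    omega⟩
  left_inv A := Subtype.ext (funext fun i => Fin.ext (by simp))
  right_inv f := by
    ext i
    refine Fin.cases ?_ (fun j => ?_) i
    · have hf := f.2
      rw [Fin.sum_univ_succ] at hf
      simp only [Fin.cons_zero]
      omega
    · simp

theorem card_Idx (n d : ℕ) : Fintype.card (Idx n d) = (n + d).choose n := by
  have hpi : {f : Fin (n + 1) → ℕ // ∑ i, f i = d} ≃ Finset.univ.piAntidiag d :=
    Equiv.subtypeEquivRight fun f => by simp [Finset.mem_piAntidiag]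
  rw [Fintype.card_congr ((Idx.equivSumEq n d).trans hpi), Fintype.card_coe,
    ← Finset.map_sym_eq_piAntidiag, Finset.card_map, Finset.sym_univ, Finset.card_univ,
    Sym.card_sym_eq_choose, Fintype.card_fin, Nat.add_right_comm, Nat.add_sub_cancel,
    Nat.choose_symm_add]

theorem sum_toMI_le {n d : ℕ} (A : Idx n d) : ∑ i, toMI A i ≤ d := A.2

section Measure

variable {α : Type*} [TopologicalSpace α] [MeasurableSpace α] {μ : Measure α} {K : Set α}

theorem Continuous.integrable_of_measure_compl_eq_zero [T2Space α] [OpensMeasurableSpace α]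
    [IsFiniteMeasureOnCompacts μ] {E : Type*} [NormedAddCommGroup E] {f : α → E}
    (hf : Continuous f) (hK : IsCompact K) (hμK : μ Kᶜ = 0) : Integrable f μ := by
  rw [← Measure.restrict_eq_self_of_ae_mem (mem_ae_iff.mpr hμK)]
  exact hf.continuousOn.integrableOn_compact hK

theorem msupport_subset_of_measure_compl_eq_zero (hK : IsClosed K) (hμK : μ Kᶜ = 0) :
    msupport μ ⊆ K := fun x hx => by
  by_contra hxK
  exact hx _ (hK.isOpen_compl.mem_nhds hxK) hμK

end Measure

section Monomials

variable {n : ℕ}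

theorem mono_zero (x : Fin n → ℝ) : mono x 0 = 1 := by simp [mono]

theorem mono_add (x : Fin n → ℝ) (a b : Fin n → ℕ) : mono x (a + b) = mono x a * mono x b := by
  simp only [mono, Pi.add_apply, pow_add, Finset.prod_mul_distrib]

theorem continuous_mono (a : Fin n → ℕ) : Continuous fun x : Fin n → ℝ => mono x a := by
  unfold mono; fun_prop

theorem continuous_vd (d : ℕ) : Continuous (vd n d) :=
  continuous_pi fun A => continuous_mono (toMI A)

end Monomials

section MomentCone

variable {n k : ℕ} {X : Set (Fin n → ℝ)}

theorem mono_mem_momCone {x : Fin n → ℝ} (hx : x ∈ X) : mono x ∈ momCone n k X :=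
  ⟨Measure.dirac x, inferInstance, by simp [Measure.dirac_apply, hx],
    fun α _ => (integral_dirac (fun z => mono z α) x).symm⟩

/-- Compactness matters: it makes every moment an honest integral rather than the junk value
`0` of a non-integrable function. -/
theorem convex_momCone (hX : IsCompact X) : Convex ℝ (momCone n k X) := by
  rintro y ⟨μ, hμ, hμX, hy⟩ z ⟨ν, hν, hνX, hz⟩ a b ha hb hab
  refine ⟨a.toNNReal • μ + b.toNNReal • ν, inferInstance, by simp [hμX, hνX], fun α hα => ?_⟩
  have hint : ∀ ρ : Measure (Fin n → ℝ), IsFiniteMeasure ρ → ρ Xᶜ = 0 →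
      Integrable (fun x => mono x α) ρ := fun ρ _ hρ =>
    (continuous_mono α).integrable_of_measure_compl_eq_zero hX hρ
  rw [integral_add_measure ((hint μ hμ hμX).smul_measure_nnreal)
      ((hint ν hν hνX).smul_measure_nnreal), integral_smul_nnreal_measure,
    integral_smul_nnreal_measure, ← hy α hα, ← hz α hα]
  simp [NNReal.smul_def, ha, hb]

end MomentCone

section MatrixFacts

variable {ι : Type*} [Fintype ι]

theorem Matrix.dotProduct_mulVec_self_eq_trace_mul_vecMulVec (A : Matrix ι ι ℝ) (v : ι → ℝ) :
    v ⬝ᵥ (A *ᵥ v) = trace (A * vecMulVec v v) := by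
  rw [mul_vecMulVec, trace_vecMulVec, dotProduct_comm]

theorem le_zero_of_forall_mul_add_mul_sq_nonpos {a : ℝ} {f : ℝ → ℝ} (hf : Continuous f)
    (h : ∀ t ∈ Set.Ioc (0 : ℝ) 1, a * t + f t * t ^ 2 ≤ 0) : a ≤ 0 := by
  have hbound : ∀ᶠ t in nhdsWithin (0 : ℝ) (Set.Ioi 0), a ≤ -(f t * t) := by
    filter_upwards [Ioc_mem_nhdsGT (zero_lt_one' ℝ)] with t ht
    have := h t ht
    nlinarith [ht.1]
  have hlim : Filter.Tendsto (fun t => -(f t * t)) (nhdsWithin (0 : ℝ) (Set.Ioi 0)) (nhds 0) := by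
    have hcont : Continuous fun t => -(f t * t) := by fun_prop
    exact (hcont.tendsto' 0 0 (by simp)).mono_left nhdsWithin_le_nhds
  exact ge_of_tendsto hlim hbound

theorem Matrix.trace_nonpos_of_det_one_add_smul_le_one [DecidableEq ι] {B : Matrix ι ι ℝ}
    (h : ∀ t ∈ Set.Ioc (0 : ℝ) 1, det (1 + t • B) ≤ 1) : trace B ≤ 0 := by
  refine le_zero_of_forall_mul_add_mul_sq_nonpos (Polynomial.continuous
    (det (1 + (Polynomial.X : Polynomial ℝ) • B.map Polynomial.C)).divX.divX) fun t ht => ?_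
  have := h t ht
  rw [det_one_add_smul] at this
  linarith

theorem Matrix.trace_inv_mul_le_card_of_det_le [DecidableEq ι] {M A : Matrix ι ι ℝ}
    (hM : 0 < M.det)
    (h : ∀ t ∈ Set.Ioc (0 : ℝ) 1, det ((1 - t) • M + t • A) ≤ det M) :
    trace (M⁻¹ * A) ≤ Fintype.card ι := by
  have hMu : IsUnit M.det := hM.ne'.isUnit
  have hfactor : ∀ t : ℝ, (1 - t) • M + t • A = M * (1 + t • (M⁻¹ * A - 1)) := fun t => by
    rw [mul_add, mul_one, mul_smul_comm, mul_sub, ← Matrix.mul_assoc, mul_nonsing_inv _ hMu,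
      Matrix.one_mul, mul_one, smul_sub, sub_smul, one_smul]
    abel
  have htrace := trace_nonpos_of_det_one_add_smul_le_one (B := M⁻¹ * A - 1) fun t ht => by
    have := h t ht
    rw [hfactor, det_mul] at this
    exact (mul_le_iff_le_one_right hM).mp this
  rw [trace_sub, trace_one] at htrace
  linarith

end MatrixFacts

section MomentMatrix

variable {n d : ℕ}

theorem momMat_add (y z : (Fin n → ℕ) → ℝ) :
    momMat n d (y + z) = momMat n d y + momMat n d z := rfl

theorem momMat_smul (c : ℝ) (y : (Fin n → ℕ) → ℝ) :
    momMat n d (c • y) = c • momMat n d y := rfl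

theorem momMat_mono (x : Fin n → ℝ) :
    momMat n d (mono x) = vecMulVec (vd n d x) (vd n d x) := by
  ext A B
  simp [momMat, vd, vecMulVec_apply, mono_add]

theorem integral_vd_dotProduct_mulVec {X : Set (Fin n → ℝ)} (hX : IsCompact X)
    {μ : Measure (Fin n → ℝ)} [IsFiniteMeasure μ] (hμX : μ Xᶜ = 0) {y : (Fin n → ℕ) → ℝ}
    (hy : ∀ α : Fin n → ℕ, ∑ i, α i ≤ 2 * d → y α = ∫ x, mono x α ∂μ)
    (A : Matrix (Idx n d) (Idx n d) ℝ) :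
    ∫ x, vd n d x ⬝ᵥ (A *ᵥ vd n d x) ∂μ = trace (A * momMat n d y) := by
  have hmoment : ∀ a b : Idx n d, ∫ x, vd n d x b * vd n d x a ∂μ = momMat n d y b a := by
    intro a b
    have hdeg : ∑ i, (toMI b + toMI a) i ≤ 2 * d := by
      simp only [Pi.add_apply, Finset.sum_add_distrib]
      linarith [sum_toMI_le a, sum_toMI_le b]
    simp only [momMat, of_apply, hy _ hdeg, vd, mono_add]
  have hint : ∀ a b : Idx n d, Integrable (fun x => A a b * (vd n d x b * vd n d x a)) μ :=
    fun a b => (((continuous_apply b).comp (continuous_vd d)).mul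
      ((continuous_apply a).comp (continuous_vd d))).integrable_of_measure_compl_eq_zero hX hμX
      |>.const_mul _
  simp only [dotProduct_mulVec_self_eq_trace_mul_vecMulVec, trace, diag, mul_apply,
    vecMulVec_apply]
  rw [integral_finsetSum _ fun a _ => integrable_finsetSum _ fun b _ => hint a b]
  refine Finset.sum_congr rfl fun a _ => ?_
  rw [integral_finsetSum _ fun b _ => hint a b]
  exact Finset.sum_congr rfl fun b _ => by rw [integral_const_mul, hmoment]

end MomentMatrix

noncomputable def christoffel (n d : ℕ) (y : (Fin n → ℕ) → ℝ) (x : Fin n → ℝ) : ℝ :=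
  vd n d x ⬝ᵥ ((momMat n d y)⁻¹ *ᵥ vd n d x)

theorem continuous_christoffel (n d : ℕ) (y : (Fin n → ℕ) → ℝ) :
    Continuous (christoffel n d y) :=
  (continuous_vd d).dotProduct (continuous_const.matrix_mulVec (continuous_vd d))

section Optimality

variable {n d : ℕ} {X : Set (Fin n → ℝ)} {y : (Fin n → ℕ) → ℝ}

theorem christoffel_le_choose_of_det_le (hX : IsCompact X) (hmem : y ∈ momCone n (2 * d) X)
    (h0 : y 0 = 1) (hdet : 0 < (momMat n d y).det)
    (hopt : ∀ z ∈ momCone n (2 * d) X, z 0 = 1 → (momMat n d z).det ≤ (momMat n d y).det)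
    {x : Fin n → ℝ} (hx : x ∈ X) : christoffel n d y x ≤ (n + d).choose n := by
  have htrace := trace_inv_mul_le_card_of_det_le (A := vecMulVec (vd n d x) (vd n d x)) hdet
    fun t ht => by
      rw [← momMat_mono, ← momMat_smul, ← momMat_smul, ← momMat_add]
      refine hopt _ (convex_momCone hX hmem (mono_mem_momCone hx) (by linarith [ht.2]) ht.1.le
        (by ring)) ?_
      simp [h0, mono_zero]
  rwa [← dotProduct_mulVec_self_eq_trace_mul_vecMulVec, card_Idx] at htrace

theorem msupport_subset_christoffel_eq_choose (hX : IsCompact X)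
    (hdet : IsUnit (momMat n d y).det) (h0 : y 0 = 1)
    (hle : ∀ x ∈ X, christoffel n d y x ≤ (n + d).choose n)
    {μ : Measure (Fin n → ℝ)} [IsFiniteMeasure μ] (hμX : μ Xᶜ = 0)
    (hy : ∀ α : Fin n → ℕ, ∑ i, α i ≤ 2 * d → y α = ∫ x, mono x α ∂μ) :
    msupport μ ⊆ {x ∈ X | christoffel n d y x = (n + d).choose n} := by
  have hcont := continuous_christoffel n d y
  have hmass : μ.real Set.univ = 1 := by
    rw [← h0, hy 0 (by simp)]
    simp [mono_zero]
  have hintegral : ∫ x, christoffel n d y x ∂μ = ∫ _, ((n + d).choose n : ℝ) ∂μ := by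
    unfold christoffel
    rw [integral_vd_dotProduct_mulVec hX hμX hy, nonsing_inv_mul _ hdet,
      trace_one, card_Idx, integral_const, hmass, one_smul]
  have hXae : ∀ᵐ x ∂μ, x ∈ X := mem_ae_iff.mpr hμX
  have hae := (integral_eq_iff_of_ae_le (hcont.integrable_of_measure_compl_eq_zero hX hμX)
    (integrable_const _) (hXae.mono hle)).mp hintegral
  exact msupport_subset_of_measure_compl_eq_zero
    (hX.isClosed.inter (isClosed_eq hcont continuous_const)) (mem_ae_iff.mp (hXae.and hae))

end Optimality

theorem christoffel_level_set_support_general (n d : ℕ) (X : Set (Fin n → ℝ))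
    (hX : IsCompact X)
    (ystar : (Fin n → ℕ) → ℝ) (hmem : ystar ∈ momCone n (2 * d) X) (h0 : ystar 0 = 1)
    (hPD : (momMat n d ystar).PosDef)
    (hopt : ∀ y ∈ momCone n (2 * d) X, y 0 = 1 →
      (momMat n d y).det ≤ (momMat n d ystar).det) :
    (∀ x ∈ X, vd n d x ⬝ᵥ ((momMat n d ystar)⁻¹ *ᵥ vd n d x) ≤ (n + d).choose n) ∧
    (∀ μ : Measure (Fin n → ℝ), IsFiniteMeasure μ → μ Xᶜ = 0 →
      (∀ α : Fin n → ℕ, (∑ i, α i) ≤ 2 * d → ystar α = ∫ x, mono x α ∂μ) →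
      msupport μ ⊆
        {x ∈ X | vd n d x ⬝ᵥ ((momMat n d ystar)⁻¹ *ᵥ vd n d x) = (n + d).choose n}) := by
  have hle : ∀ x ∈ X, christoffel n d ystar x ≤ (n + d).choose n := fun x hx =>
    christoffel_le_choose_of_det_le hX hmem h0 hPD.det_pos hopt hx
  exact ⟨hle, fun μ _ hμX hy =>
    msupport_subset_christoffel_eq_choose hX hPD.det_pos.ne'.isUnit h0 hle hμX hy⟩

/-- If `y*` is the optimizer of the ideal D-optimal design problem on a compact `X` with
nonempty interior, then its Christoffel polynomial `p*_d(x) = v_d(x)ᵀ M_d(y*)⁻¹ v_d(x)`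
satisfies `p*_d ≤ binom (n+d) n` on `X`, and every representing measure `μ*` of `y*` on
`X` is supported on `{x ∈ X : p*_d(x) = binom (n+d) n}`. -/
theorem christoffel_level_set_support (n d : ℕ) (X : Set (Fin n → ℝ))
    (hX : IsCompact X) (hint : (interior X).Nonempty)
    (ystar : (Fin n → ℕ) → ℝ) (hmem : ystar ∈ momCone n (2 * d) X) (h0 : ystar 0 = 1)
    (hPD : (momMat n d ystar).PosDef)
    (hopt : ∀ y ∈ momCone n (2 * d) X, y 0 = 1 →
      (momMat n d y).det ≤ (momMat n d ystar).det) :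
    (∀ x ∈ X, vd n d x ⬝ᵥ ((momMat n d ystar)⁻¹ *ᵥ vd n d x) ≤ (n + d).choose n) ∧
    (∀ μ : Measure (Fin n → ℝ), IsFiniteMeasure μ → μ Xᶜ = 0 →
      (∀ α : Fin n → ℕ, (∑ i, α i) ≤ 2 * d → ystar α = ∫ x, mono x α ∂μ) →
      msupport μ ⊆
        {x ∈ X | vd n d x ⬝ᵥ ((momMat n d ystar)⁻¹ *ᵥ vd n d x) = (n + d).choose n}) :=
  christoffel_level_set_support_general n d X hX ystar hmem h0 hPD hopt
end

section
/- Consider D-optimal design on X = [−1,1] for polynomial regression of degree d = 5 with the full monomial basis (1, x, …, x^5). The probability measure assigning equal weight 1/6 to the points ±1 and the four critical points of the Legendre polynomial of degree 5 in (−1,1) maximizes det M_5(μ) := det(∫ v_5(x) v_5(x)^T dμ) over all probability measures μ on [−1,1]. -/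
/-!
Kiefer–Wolfowitz argument. Let `M₀` be the information matrix of the equal-weight design `μ₀`
and `d(x) = v(x)ᵀ M₀⁻¹ v(x)` its variance function. For a design `μ` on `[-1,1]`,
`tr (M₀⁻¹ M(μ)) = ∫ d dμ`, and by AM–GM on the eigenvalues of `M₀^{-1/2} M(μ) M₀^{-1/2}`,
`det M(μ) ≤ det M₀` as soon as this trace is at most `6`. The critical points of `P₅` are
`±√((7 ± 2√7)/21)`, so the moments of `μ₀` and `M₀⁻¹` are explicit rationals, and
`6 - d(x) = 45/64 (1 - x²) (21x⁴ - 14x² + 1)²` (the last factor is `8/15 P₅'`), which is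
nonnegative on `[-1,1]`.
-/

open MeasureTheory Real Matrix
open scoped BigOperators ENNReal

/-- The 6×6 information (moment) matrix `∫ v₅(x) v₅(x)ᵀ dμ` for univariate polynomial
regression of degree 5, with `v₅(x) = (1, x, x², x³, x⁴, x⁵)ᵀ`. -/
noncomputable def infoMat5 (μ : Measure ℝ) : Matrix (Fin 6) (Fin 6) ℝ :=
  Matrix.of fun i j => ∫ x, x ^ ((i : ℕ) + (j : ℕ)) ∂μ

/-- The Legendre polynomial of degree 5. -/
noncomputable def legendre5 : ℝ → ℝ := fun x => (63 * x ^ 5 - 70 * x ^ 3 + 15 * x) / 8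

namespace Matrix

variable {n : Type*} [Fintype n] [DecidableEq n]

lemma PosSemidef.det_le_exp_trace_sub_card {C : Matrix n n ℝ} (hC : C.PosSemidef) :
    C.det ≤ Real.exp (C.trace - Fintype.card n) := by
  rw [hC.1.det_eq_prod_eigenvalues, hC.1.trace_eq_sum_eigenvalues]
  simp only [RCLike.ofReal_real_eq_id, id]
  calc ∏ i, hC.1.eigenvalues i ≤ ∏ i, Real.exp (hC.1.eigenvalues i - 1) :=
        Finset.prod_le_prod (fun i _ => hC.eigenvalues_nonneg i)
          fun i _ => by linarith [Real.add_one_le_exp (hC.1.eigenvalues i - 1)]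
    _ = Real.exp (∑ i, hC.1.eigenvalues i - Fintype.card n) := by
        rw [← Real.exp_sum, Finset.sum_sub_distrib]; simp

open scoped MatrixOrder in
lemma PosSemidef.det_le_of_trace_inv_mul_le {A B : Matrix n n ℝ} (hA : A.PosSemidef)
    (hB : B.PosDef) (h : (B⁻¹ * A).trace ≤ Fintype.card n) : A.det ≤ B.det := by
  set S := CFC.sqrt B
  have hSS : S * S = B := CFC.sqrt_mul_sqrt_self B hB.posSemidef.nonneg
  have hS : S⁻¹ᴴ = S⁻¹ := (nonneg_iff_posSemidef.mp (CFC.sqrt_nonneg B)).1.inv.eq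
  have hdetS : S.det * S.det = B.det := by rw [← det_mul, hSS]
  have hC : (S⁻¹ * A * S⁻¹).PosSemidef := by
    simpa only [hS] using hA.mul_mul_conjTranspose_same S⁻¹
  have hdetC : (S⁻¹ * A * S⁻¹).det = A.det / B.det := by
    rw [det_mul, det_mul, det_nonsing_inv, Ring.inverse_eq_inv', ← hdetS]
    field_simp
  have htrC : (S⁻¹ * A * S⁻¹).trace = (B⁻¹ * A).trace := by
    rw [trace_mul_cycle, ← mul_inv_rev, hSS]
  have hle : A.det / B.det ≤ 1 := by
    rw [← hdetC]
    refine hC.det_le_exp_trace_sub_card.trans ?_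
    rw [Real.exp_le_one_iff, htrC]
    linarith
  rwa [div_le_one hB.det_pos] at hle

lemma cons_val_five {α : Type*} {m : ℕ} (x : α) (u : Fin m.succ.succ.succ.succ.succ → α) :
    vecCons x u 5 = vecHead (vecTail (vecTail (vecTail (vecTail u)))) :=
  rfl

end Matrix

noncomputable def momentMatrix (n : ℕ) (μ : Measure ℝ) : Matrix (Fin n) (Fin n) ℝ :=
  Matrix.of fun i j => ∫ x, x ^ ((i : ℕ) + (j : ℕ)) ∂μ

def monomialVec (n : ℕ) (x : ℝ) : Fin n → ℝ := fun i => x ^ (i : ℕ)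

lemma infoMat5_eq_momentMatrix : infoMat5 = momentMatrix 6 := rfl

lemma monomialVec_dotProduct_mulVec {n : ℕ} (N : Matrix (Fin n) (Fin n) ℝ) (x : ℝ) :
    monomialVec n x ⬝ᵥ N *ᵥ monomialVec n x = ∑ i, ∑ j, N i j * x ^ ((i : ℕ) + j) := by
  simp only [dotProduct, mulVec, monomialVec, Finset.mul_sum, pow_add]
  exact Finset.sum_congr rfl fun i _ => Finset.sum_congr rfl fun j _ => by ring

lemma integrable_pow_of_ae_mem_Icc {μ : Measure ℝ} [IsFiniteMeasure μ]
    (h : ∀ᵐ x ∂μ, x ∈ Set.Icc (-1 : ℝ) 1) (k : ℕ) : Integrable (fun x => x ^ k) μ :=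
  Integrable.of_bound (by fun_prop) 1 <| h.mono fun x hx =>
    by simpa [abs_pow] using pow_le_one₀ (abs_nonneg x) (abs_le.mpr hx)

section Moments

variable {μ : Measure ℝ} {n : ℕ} (hint : ∀ k : ℕ, Integrable (fun x : ℝ => x ^ k) μ)
include hint

lemma sum_sum_mul_integral_pow (c : Fin n → Fin n → ℝ) :
    ∑ i, ∑ j, c i j * ∫ x, x ^ ((i : ℕ) + j) ∂μ = ∫ x, ∑ i, ∑ j, c i j * x ^ ((i : ℕ) + j) ∂μ := by
  rw [integral_finsetSum _ fun i _ => integrable_finsetSum _ fun j _ => (hint _).const_mul _]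
  refine Finset.sum_congr rfl fun i _ => ?_
  rw [integral_finsetSum _ fun j _ => (hint _).const_mul _]
  simp only [integral_const_mul]

lemma momentMatrix_posSemidef : (momentMatrix n μ).PosSemidef := by
  refine .of_dotProduct_mulVec_nonneg ?_ fun w => ?_
  · ext i j
    simp [momentMatrix, Nat.add_comm]
  · have hexp : star w ⬝ᵥ momentMatrix n μ *ᵥ w =
        ∑ i, ∑ j, w i * w j * ∫ x, x ^ ((i : ℕ) + j) ∂μ := by
      simp only [dotProduct, mulVec, momentMatrix, of_apply, star_trivial, Finset.mul_sum]
      exact Finset.sum_congr rfl fun i _ => Finset.sum_congr rfl fun j _ => by ring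
    rw [hexp, sum_sum_mul_integral_pow hint]
    refine integral_nonneg fun x => ?_
    have hsq : ∑ i, ∑ j, w i * w j * x ^ ((i : ℕ) + j) = (∑ i, w i * x ^ (i : ℕ)) ^ 2 := by
      rw [sq, Finset.sum_mul_sum]
      exact Finset.sum_congr rfl fun i _ => Finset.sum_congr rfl fun j _ => by ring
    rw [hsq]
    positivity

lemma trace_mul_momentMatrix (N : Matrix (Fin n) (Fin n) ℝ) :
    (N * momentMatrix n μ).trace = ∫ x, monomialVec n x ⬝ᵥ N *ᵥ monomialVec n x ∂μ := by
  simp only [monomialVec_dotProduct_mulVec, trace, diag, mul_apply, momentMatrix, of_apply,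
    Nat.add_comm]
  exact sum_sum_mul_integral_pow hint N

end Moments

theorem det_momentMatrix_le_of_variance_le {n : ℕ} {μ μ₀ : Measure ℝ} [IsProbabilityMeasure μ]
    (hint : ∀ k : ℕ, Integrable (fun x : ℝ => x ^ k) μ)
    (hint₀ : ∀ k : ℕ, Integrable (fun x : ℝ => x ^ k) μ₀)
    {N : Matrix (Fin n) (Fin n) ℝ} (hN : momentMatrix n μ₀ * N = 1)
    (hvar : ∀ᵐ x ∂μ, monomialVec n x ⬝ᵥ N *ᵥ monomialVec n x ≤ n) :
    (momentMatrix n μ).det ≤ (momentMatrix n μ₀).det := by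
  have hpd : (momentMatrix n μ₀).PosDef :=
    (momentMatrix_posSemidef hint₀).posDef_iff_isUnit.mpr (IsUnit.of_mul_eq_one _ hN)
  refine (momentMatrix_posSemidef hint).det_le_of_trace_inv_mul_le hpd ?_
  have hvar_int : Integrable (fun x => monomialVec n x ⬝ᵥ N *ᵥ monomialVec n x) μ := by
    simp only [monomialVec_dotProduct_mulVec]
    exact integrable_finsetSum _ fun i _ => integrable_finsetSum _ fun j _ => (hint _).const_mul _
  rw [inv_eq_right_inv hN, trace_mul_momentMatrix hint, Fintype.card_fin]
  calc _ ≤ ∫ _, (n : ℝ) ∂μ := integral_mono_ae hvar_int (integrable_const _) hvar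
    _ = n := by simp

lemma hasDerivAt_legendre5 (x : ℝ) :
    HasDerivAt legendre5 ((315 * x ^ 4 - 210 * x ^ 2 + 15) / 8) x := by
  have h := (((hasDerivAt_pow 5 x).const_mul 63).sub ((hasDerivAt_pow 3 x).const_mul 70)).add
    ((hasDerivAt_id x).const_mul 15)
  exact (h.div_const 8).congr_deriv (by norm_num; ring)

namespace Legendre5

noncomputable def critOuter : ℝ := √((7 + 2 * √7) / 21)

noncomputable def critInner : ℝ := √((7 - 2 * √7) / 21)

noncomputable def critPts : Finset ℝ := {critOuter, -critOuter, critInner, -critInner}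

lemma sqrt_seven_lt : √7 < 7 / 2 := by
  rw [sqrt_lt' (by norm_num)]; norm_num

lemma critOuter_sq : critOuter ^ 2 = (7 + 2 * √7) / 21 :=
  sq_sqrt (by positivity)

lemma critInner_sq : critInner ^ 2 = (7 - 2 * √7) / 21 :=
  sq_sqrt (by linarith [sqrt_seven_lt])

lemma critInner_pos : 0 < critInner :=
  sqrt_pos.mpr (by linarith [sqrt_seven_lt])

lemma critInner_lt_critOuter : critInner < critOuter :=
  sqrt_lt_sqrt (by linarith [sqrt_seven_lt])
    (by linarith [sqrt_pos.mpr (show (0 : ℝ) < 7 by norm_num)])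

lemma critOuter_sq_add_critInner_sq : critOuter ^ 2 + critInner ^ 2 = 2 / 3 := by
  rw [critOuter_sq, critInner_sq]; ring

lemma critOuter_sq_mul_critInner_sq : critOuter ^ 2 * critInner ^ 2 = 1 / 21 := by
  rw [critOuter_sq, critInner_sq]
  linear_combination (-4 / 441 : ℝ) * sq_sqrt (show (0 : ℝ) ≤ 7 by norm_num)

lemma deriv_legendre5_eq (x : ℝ) : deriv legendre5 x =
    315 / 8 * ((x - critOuter) * (x + critOuter) * (x - critInner) * (x + critInner)) := by
  rw [(hasDerivAt_legendre5 x).deriv]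
  linear_combination (315 / 8 * x ^ 2) * critOuter_sq_add_critInner_sq
    - (315 / 8) * critOuter_sq_mul_critInner_sq

lemma mem_critPts_of_deriv_legendre5_eq_zero {x : ℝ} (hx : deriv legendre5 x = 0) :
    x ∈ critPts := by
  simpa [deriv_legendre5_eq, critPts, sub_eq_zero, add_eq_zero_iff_eq_neg, or_assoc] using hx

lemma sum_critPts {M : Type*} [AddCommMonoid M] (f : ℝ → M) :
    ∑ x ∈ critPts, f x = f critOuter + f (-critOuter) + f critInner + f (-critInner) := by
  have hb := critInner_pos
  have hba := critInner_lt_critOuter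
  rw [critPts, Finset.sum_insert, Finset.sum_insert, Finset.sum_pair, add_assoc, add_assoc]
  all_goals grind

lemma card_critPts : critPts.card = 4 := by
  rw [Finset.card_eq_sum_ones, sum_critPts]

lemma critOuter_quartic : 21 * critOuter ^ 4 - 14 * critOuter ^ 2 + 1 = 0 := by
  linear_combination (21 * critOuter ^ 2) * critOuter_sq_add_critInner_sq
    - 21 * critOuter_sq_mul_critInner_sq

lemma critInner_quartic : 21 * critInner ^ 4 - 14 * critInner ^ 2 + 1 = 0 := by
  linear_combination (21 * critInner ^ 2) * critOuter_sq_add_critInner_sq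
    - 21 * critOuter_sq_mul_critInner_sq

lemma critOuter_pow_add_critInner_pow_add_four (k : ℕ) :
    critOuter ^ (k + 4) + critInner ^ (k + 4) =
      (14 * (critOuter ^ (k + 2) + critInner ^ (k + 2)) - (critOuter ^ k + critInner ^ k)) / 21 := by
  linear_combination (critOuter ^ k / 21) * critOuter_quartic
    + (critInner ^ k / 21) * critInner_quartic

lemma sum_critPts_pow (k : ℕ) :
    ∑ x ∈ critPts, x ^ k = (1 + (-1) ^ k) * (critOuter ^ k + critInner ^ k) := by
  rw [sum_critPts, neg_pow critOuter, neg_pow critInner]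
  ring

end Legendre5

lemma Fintype.sum_comp_eq_sum_of_injective {ι α M : Type*} [Fintype ι] [DecidableEq α]
    [AddCommMonoid M] {s : Finset α} {t : ι → α} (ht : Function.Injective t)
    (hts : ∀ i, t i ∈ s) (hcard : s.card ≤ Fintype.card ι) (f : α → M) :
    ∑ i, f (t i) = ∑ x ∈ s, f x := by
  have himage : Finset.univ.image t = s :=
    Finset.eq_of_subset_of_card_le (by simpa [Finset.subset_iff] using hts)
      (by rwa [Finset.card_image_of_injective _ ht, Finset.card_univ])
  rw [← himage, Finset.sum_image fun i _ j _ h => ht h]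

section AtomicDesign

variable {ι : Type*} [Fintype ι] {c : ℝ≥0∞} {a b : ℝ} {p : ι → ℝ} (f : ℝ → ℝ)

lemma integrable_smul_dirac_add_sum (hc : c ≠ ∞) :
    Integrable f (c • (Measure.dirac a + Measure.dirac b + ∑ i, Measure.dirac (p i))) :=
  (((integrable_dirac enorm_lt_top).add_measure (integrable_dirac enorm_lt_top)).add_measure
    (integrable_finsetSum_measure.mpr fun _ _ => integrable_dirac enorm_lt_top)).smul_measure hc

lemma integral_smul_dirac_add_sum :
    ∫ x, f x ∂(c • (Measure.dirac a + Measure.dirac b + ∑ i, Measure.dirac (p i))) =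
      c.toReal * (f a + f b + ∑ i, f (p i)) := by
  have hδ : ∀ y, Integrable f (Measure.dirac y) := fun y => integrable_dirac enorm_lt_top
  rw [integral_smul_measure, integral_add_measure ((hδ a).add_measure (hδ b))
    (integrable_finsetSum_measure.mpr fun i _ => hδ (p i)), integral_add_measure (hδ a) (hδ b),
    integral_finsetSum_measure fun i _ => hδ (p i)]
  simp only [integral_dirac, smul_eq_mul]

end AtomicDesign

/-- The moments `∫ x ^ k ∂μ₀` of the Fekete design; only orders `k ≤ 10` are meant: the catch-all
value `0` is the true moment only for odd `k`. -/
noncomputable def feketeMoment : ℕ → ℝ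
  | 0 => 1
  | 2 => 5 / 9
  | 4 => 85 / 189
  | 6 => 227 / 567
  | 8 => 4435 / 11907
  | 10 => 12725 / 35721
  | _ => 0

open Legendre5 in
lemma integral_pow_feketeDesign {t : Fin 4 → ℝ} (ht : Function.Injective t)
    (hcrit : ∀ i, deriv legendre5 (t i) = 0) {k : ℕ} (hk : k ≤ 10) :
    ∫ x, x ^ k ∂((6 : ℝ≥0∞)⁻¹ • (Measure.dirac (-1) + Measure.dirac 1 + ∑ i, Measure.dirac (t i)))
      = feketeMoment k := by
  rw [integral_smul_dirac_add_sum, Fintype.sum_comp_eq_sum_of_injective (f := fun x => x ^ k) ht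
    (fun i => mem_critPts_of_deriv_legendre5_eq_zero (hcrit i)) card_critPts.le, sum_critPts_pow]
  interval_cases k <;>
    norm_num [feketeMoment, critOuter_pow_add_critInner_pow_add_four, critOuter_sq_add_critInner_sq]

noncomputable def feketeInfoMat : Matrix (Fin 6) (Fin 6) ℝ :=
  Matrix.of fun i j => feketeMoment (i + j)

noncomputable def feketeInfoMatInv : Matrix (Fin 6) (Fin 6) ℝ :=
  !![339/64, 0, -315/16, 0, 945/64, 0;
     0, 3825/64, 0, -1365/8, 0, 7119/64;
     -315/16, 0, 1995/16, 0, -441/4, 0;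
     0, -1365/8, 0, 9261/16, 0, -6615/16;
     945/64, 0, -441/4, 0, 6615/64, 0;
     0, 7119/64, 0, -6615/16, 0, 19845/64]

lemma feketeInfoMat_mul_feketeInfoMatInv : feketeInfoMat * feketeInfoMatInv = 1 := by
  ext i j
  simp only [feketeInfoMat, feketeInfoMatInv, mul_apply, Fin.sum_univ_six, of_apply]
  fin_cases i <;> fin_cases j <;> norm_num [feketeMoment, one_apply, vecHead, vecTail,
    cons_val_two, cons_val_three, cons_val_four, cons_val_five]

lemma monomialVec_dotProduct_feketeInfoMatInv_mulVec (x : ℝ) :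
    monomialVec 6 x ⬝ᵥ feketeInfoMatInv *ᵥ monomialVec 6 x =
      6 - 45 / 64 * (1 - x ^ 2) * (21 * x ^ 4 - 14 * x ^ 2 + 1) ^ 2 := by
  rw [monomialVec_dotProduct_mulVec]
  simp only [feketeInfoMatInv, Fin.sum_univ_six, of_apply]
  norm_num [vecHead, vecTail, cons_val_two, cons_val_three, cons_val_four, cons_val_five]
  ring

theorem d_optimal_design_interval_general (t : Fin 4 → ℝ) (htinj : Function.Injective t)
    (hcrit : ∀ i, deriv legendre5 (t i) = 0)
    (μ0 : Measure ℝ)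
    (hμ0 : μ0 = (6 : ℝ≥0∞)⁻¹ •
      (Measure.dirac (-1) + Measure.dirac 1 + ∑ i, Measure.dirac (t i))) :
    ∀ μ : Measure ℝ, IsProbabilityMeasure μ → μ (Set.Icc (-1 : ℝ) 1)ᶜ = 0 →
      (infoMat5 μ).det ≤ (infoMat5 μ0).det := by
  intro μ _ hsupp
  rw [infoMat5_eq_momentMatrix]
  have hμ : ∀ᵐ x ∂μ, x ∈ Set.Icc (-1 : ℝ) 1 := ae_iff.mpr hsupp
  have hint₀ : ∀ k : ℕ, Integrable (fun x : ℝ => x ^ k) μ0 := fun k => by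
    rw [hμ0]; exact integrable_smul_dirac_add_sum _ (by simp)
  have hmoments : momentMatrix 6 μ0 = feketeInfoMat := by
    ext i j
    rw [hμ0]
    exact integral_pow_feketeDesign htinj hcrit (by omega)
  refine det_momentMatrix_le_of_variance_le (integrable_pow_of_ae_mem_Icc hμ) hint₀
    (hmoments ▸ feketeInfoMat_mul_feketeInfoMatInv) ?_
  filter_upwards [hμ] with x hx
  rw [monomialVec_dotProduct_feketeInfoMatInv_mulVec]
  have hx2 : 0 ≤ 1 - x ^ 2 := by nlinarith [hx.1, hx.2]
  nlinarith [mul_nonneg hx2 (sq_nonneg (21 * x ^ 4 - 14 * x ^ 2 + 1))]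

/-- D-optimal design on `[-1,1]` for degree-5 polynomial regression: the probability
measure putting mass `1/6` on each of `±1` and the four critical points of the degree-5
Legendre polynomial in `(-1,1)` maximizes `det M₅(μ)` over all probability measures on
`[-1,1]`. -/
theorem d_optimal_design_interval (t : Fin 4 → ℝ) (htinj : Function.Injective t)
    (htmem : ∀ i, t i ∈ Set.Ioo (-1 : ℝ) 1)
    (hcrit : ∀ i, deriv legendre5 (t i) = 0)
    (μ0 : Measure ℝ)
    (hμ0 : μ0 = (6 : ℝ≥0∞)⁻¹ •
      (Measure.dirac (-1) + Measure.dirac 1 + ∑ i, Measure.dirac (t i))) :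
    ∀ μ : Measure ℝ, IsProbabilityMeasure μ → μ (Set.Icc (-1 : ℝ) 1)ᶜ = 0 →
      (infoMat5 μ).det ≤ (infoMat5 μ0).det :=
  d_optimal_design_interval_general t htinj hcrit μ0 hμ0
end

section
/- Let S² = {x ∈ R³ : x₁² + x₂² + x₃² = 1} and consider linear regression with regressors Φ(x) = (1, x₁, x₂, x₃). The uniform probability measure on the six points (±1,0,0), (0,±1,0), (0,0,±1) has information matrix M = diag(1, 1/3, 1/3, 1/3), and this measure maximizes det M(μ) over all probability measures μ on S², with optimal value det M = 1/27. -/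
/-! `M(μ)` is the Gram matrix of the regressors, hence positive semidefinite. Rescale them by
`d = (1, √3, √3, √3)`, so that `D² = M(μ₀)⁻¹` for `D = diag d`: on `S²` the rescaled regressors
have squared norm `1 + 3|x|² = 4` (the Kiefer–Wolfowitz identity), so `D M(μ) D` has trace `4`,
and AM–GM on its eigenvalues gives `27 det M(μ) = det (D M(μ) D) ≤ (4 / 4)⁴`. -/

open MeasureTheory Real Matrix
open scoped BigOperators ENNReal

/-- The unit sphere in `ℝ³`. -/
def S2 : Set (Fin 3 → ℝ) := {x | x 0 ^ 2 + x 1 ^ 2 + x 2 ^ 2 = 1}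

/-- The regressors `Φ(x) = (1, x₁, x₂, x₃)`. -/
noncomputable def Phi (x : Fin 3 → ℝ) : Fin 4 → ℝ := ![1, x 0, x 1, x 2]

/-- The 4×4 information matrix `∫ Φ(x) Φ(x)ᵀ dμ`. -/
noncomputable def infoMatS2 (μ : Measure (Fin 3 → ℝ)) : Matrix (Fin 4) (Fin 4) ℝ :=
  Matrix.of fun i j => ∫ x, Phi x i * Phi x j ∂μ

theorem Real.prod_le_sum_div_card_pow {ι : Type*} [Fintype ι] (z : ι → ℝ) (hz : ∀ i, 0 ≤ z i) :
    ∏ i, z i ≤ ((∑ i, z i) / Fintype.card ι) ^ Fintype.card ι := by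
  rcases isEmpty_or_nonempty ι with hι | hι
  · simp
  set n := Fintype.card ι
  have hn : (0 : ℝ) < n := Nat.cast_pos.mpr Fintype.card_pos
  have amgm := Real.geom_mean_le_arith_mean_weighted Finset.univ (fun _ => (n : ℝ)⁻¹) z
    (fun _ _ => by positivity) (by simp [n, Finset.card_univ, hn.ne']) (fun i _ => hz i)
  rw [Real.finsetProd_rpow _ _ (fun i _ => hz i), ← Finset.mul_sum, inv_mul_eq_div] at amgm
  calc ∏ i, z i = ((∏ i, z i) ^ (n : ℝ)⁻¹) ^ n := by
        rw [← Real.rpow_natCast, ← Real.rpow_mul (Finset.prod_nonneg fun i _ => hz i),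
          inv_mul_cancel₀ hn.ne', Real.rpow_one]
    _ ≤ ((∑ i, z i) / n) ^ n :=
        pow_le_pow_left₀ (Real.rpow_nonneg (Finset.prod_nonneg fun i _ => hz i) _) amgm n

theorem Matrix.PosSemidef.det_le_trace_div_card_pow {n : Type*} [Fintype n] [DecidableEq n]
    {A : Matrix n n ℝ} (hA : A.PosSemidef) :
    A.det ≤ (A.trace / Fintype.card n) ^ Fintype.card n := by
  rw [hA.1.det_eq_prod_eigenvalues, hA.1.trace_eq_sum_eigenvalues]
  simpa using Real.prod_le_sum_div_card_pow _ hA.eigenvalues_nonneg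

section SecondMoment

variable {α ι : Type*} [MeasurableSpace α] [Fintype ι] (μ : Measure α) (f : α → ι → ℝ)

noncomputable def secondMomentMatrix : Matrix ι ι ℝ :=
  Matrix.of fun i j => ∫ x, f x i * f x j ∂μ

variable {μ f}

theorem secondMomentMatrix_posSemidef (hf : ∀ i j, Integrable (fun x => f x i * f x j) μ) :
    (secondMomentMatrix μ f).PosSemidef := by
  refine .of_dotProduct_mulVec_nonneg ?_ fun v => ?_
  · ext i j
    simp only [conjTranspose_apply, star_trivial, secondMomentMatrix, of_apply, mul_comm]
  · calc 0 ≤ ∫ x, (∑ i, v i * f x i) ^ 2 ∂μ := integral_nonneg fun x => sq_nonneg _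
      _ = ∫ x, ∑ i, ∑ j, v i * v j * (f x i * f x j) ∂μ := by
        congr 1 with x
        rw [sq, Finset.sum_mul_sum]
        exact Finset.sum_congr rfl fun i _ => Finset.sum_congr rfl fun j _ => by ring
      _ = ∑ i, ∑ j, v i * v j * ∫ x, f x i * f x j ∂μ := by
        rw [integral_finsetSum _ fun i _ => integrable_finsetSum _ fun j _ =>
          (hf i j).const_mul (v i * v j)]
        refine Finset.sum_congr rfl fun i _ => ?_
        rw [integral_finsetSum _ fun j _ => (hf i j).const_mul (v i * v j)]
        exact Finset.sum_congr rfl fun j _ => integral_const_mul _ _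
      _ = star v ⬝ᵥ (secondMomentMatrix μ f *ᵥ v) := by
        simp only [dotProduct, mulVec, star_trivial, Finset.mul_sum, secondMomentMatrix, of_apply]
        exact Finset.sum_congr rfl fun i _ => Finset.sum_congr rfl fun j _ => by ring

theorem trace_secondMomentMatrix (hf : ∀ i, Integrable (fun x => f x i * f x i) μ) :
    (secondMomentMatrix μ f).trace = ∫ x, ∑ i, f x i ^ 2 ∂μ := by
  simp only [trace, diag, secondMomentMatrix, of_apply, sq]
  exact (integral_finsetSum _ fun i _ => hf i).symm

theorem secondMomentMatrix_mul_left [DecidableEq ι] (d : ι → ℝ) :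
    secondMomentMatrix μ (fun x => d * f x) = diagonal d * secondMomentMatrix μ f * diagonal d := by
  ext i j
  simp only [secondMomentMatrix, of_apply, diagonal_mul, mul_diagonal, Pi.mul_apply,
    ← integral_const_mul, ← integral_mul_const]
  congr 1 with x
  ring

end SecondMoment

theorem abs_Phi_le_one {x : Fin 3 → ℝ} (hx : x ∈ S2) (i : Fin 4) : |Phi x i| ≤ 1 := by
  rw [S2, Set.mem_ofPred_eq] at hx
  rw [abs_le_one_iff_mul_self_le_one]
  fin_cases i <;> simp [Phi] <;> nlinarith [sq_nonneg (x 0), sq_nonneg (x 1), sq_nonneg (x 2)]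

theorem integrable_Phi_mul_Phi {μ : Measure (Fin 3 → ℝ)} [IsFiniteMeasure μ] (hμ : μ S2ᶜ = 0)
    (i j : Fin 4) : Integrable (fun x => Phi x i * Phi x j) μ := by
  have hmeas : ∀ k, Measurable fun x => Phi x k := fun k => by
    fin_cases k <;> simp only [Phi] <;> fun_prop
  refine .of_bound ((hmeas i).mul (hmeas j)).aestronglyMeasurable 1 ?_
  filter_upwards [mem_ae_iff.mpr hμ] with x hx
  rw [norm_mul, Real.norm_eq_abs, Real.norm_eq_abs]
  exact mul_le_one₀ (abs_Phi_le_one hx i) (abs_nonneg _) (abs_Phi_le_one hx j)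

theorem infoMatS2_eq_secondMomentMatrix (μ : Measure (Fin 3 → ℝ)) :
    infoMatS2 μ = secondMomentMatrix μ Phi := rfl

theorem det_infoMatS2_le (μ : Measure (Fin 3 → ℝ)) [IsProbabilityMeasure μ] (hμ : μ S2ᶜ = 0) :
    (infoMatS2 μ).det ≤ 1 / 27 := by
  set d : Fin 4 → ℝ := ![1, √3, √3, √3]
  have hint : ∀ i j, Integrable (fun x => (d * Phi x) i * (d * Phi x) j) μ := fun i j => by
    simpa only [Pi.mul_apply, mul_mul_mul_comm] using
      (integrable_Phi_mul_Phi hμ i j).const_mul (d i * d j)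
  have hnorm : ∀ x ∈ S2, ∑ i, (d * Phi x) i ^ 2 = 4 := fun x hx => by
    rw [S2, Set.mem_ofPred_eq] at hx
    simp only [d, Phi, Pi.mul_apply, Fin.sum_univ_four, mul_pow, cons_val, one_pow, mul_one,
      sq_sqrt (zero_le_three : (0 : ℝ) ≤ 3)]
    linarith
  have htrace : (secondMomentMatrix μ fun x => d * Phi x).trace = 4 := by
    rw [trace_secondMomentMatrix fun i => hint i i,
      integral_congr_ae ((show ∀ᵐ x ∂μ, x ∈ S2 from mem_ae_iff.mpr hμ).mono hnorm)]
    simp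
  have hd : (diagonal d).det ^ 2 = 27 := by
    norm_num [d, Fin.prod_univ_succ, mul_pow]
  have hdet : (secondMomentMatrix μ fun x => d * Phi x).det = 27 * (infoMatS2 μ).det := by
    rw [secondMomentMatrix_mul_left, det_mul, det_mul, infoMatS2_eq_secondMomentMatrix]
    linear_combination (secondMomentMatrix μ Phi).det * hd
  have hamgm := (secondMomentMatrix_posSemidef hint).det_le_trace_div_card_pow
  rw [hdet, htrace] at hamgm
  norm_num at hamgm
  linarith

section Dirac

variable {α ι : Type*} [MeasurableSpace α] [MeasurableSingletonClass α] (s : Finset ι) (a : ι → α)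

theorem integrable_finsetSum_dirac (f : α → ℝ) : Integrable f (∑ i ∈ s, Measure.dirac (a i)) :=
  integrable_finsetSum_measure.mpr fun _ _ => integrable_dirac enorm_lt_top

theorem integral_finsetSum_dirac (f : α → ℝ) :
    ∫ x, f x ∂(∑ i ∈ s, Measure.dirac (a i)) = ∑ i ∈ s, f (a i) := by
  rw [integral_finsetSum_measure fun _ _ => integrable_dirac enorm_lt_top]
  simp only [integral_dirac]

end Dirac

noncomputable def octahedronDesign : Measure (Fin 3 → ℝ) :=
  (6 : ℝ≥0∞)⁻¹ • ((∑ i : Fin 3, Measure.dirac (Pi.single i (1 : ℝ))) +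
    ∑ i : Fin 3, Measure.dirac (-Pi.single i (1 : ℝ)))

theorem integral_octahedronDesign (f : (Fin 3 → ℝ) → ℝ) :
    ∫ x, f x ∂octahedronDesign = (∑ i, f (Pi.single i 1) + ∑ i, f (-Pi.single i 1)) / 6 := by
  rw [octahedronDesign, integral_smul_measure, integral_add_measure
    (integrable_finsetSum_dirac _ _ f) (integrable_finsetSum_dirac _ _ f),
    integral_finsetSum_dirac, integral_finsetSum_dirac]
  simp [div_eq_inv_mul]

theorem infoMatS2_octahedronDesign :
    infoMatS2 octahedronDesign = Matrix.diagonal ![1, 1/3, 1/3, 1/3] := by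
  ext i j
  rw [infoMatS2, of_apply, integral_octahedronDesign]
  fin_cases i <;> fin_cases j <;> simp [Phi, Pi.single_apply] <;> norm_num

/-- D-optimal design for linear regression on the sphere `S²`: the uniform probability
measure `μ₀` on the six points `(±1,0,0), (0,±1,0), (0,0,±1)` has information matrix
`diag(1, 1/3, 1/3, 1/3)`, maximizes `det M(μ)` over probability measures on `S²`, and
the optimal value is `1/27`. -/
theorem d_optimal_design_sphere (μ0 : Measure (Fin 3 → ℝ))
    (hμ0 : μ0 = (6 : ℝ≥0∞)⁻¹ •
      ((∑ i : Fin 3, Measure.dirac (Pi.single i (1 : ℝ))) +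
        ∑ i : Fin 3, Measure.dirac (-Pi.single i (1 : ℝ)))) :
    infoMatS2 μ0 = Matrix.diagonal ![1, 1/3, 1/3, 1/3] ∧
    (∀ μ : Measure (Fin 3 → ℝ), IsProbabilityMeasure μ → μ S2ᶜ = 0 →
      (infoMatS2 μ).det ≤ (infoMatS2 μ0).det) ∧
    (infoMatS2 μ0).det = 1 / 27 := by
  have hM0 : infoMatS2 μ0 = Matrix.diagonal ![1, 1/3, 1/3, 1/3] := hμ0 ▸ infoMatS2_octahedronDesign
  have hdet : (infoMatS2 μ0).det = 1 / 27 := by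
    rw [hM0, det_diagonal]
    norm_num [Fin.prod_univ_succ]
  exact ⟨hM0, fun μ _ hμ => hdet ▸ det_infoMatS2_le μ hμ, hdet⟩
end
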